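/- arXiv:math/0702805 — 7 statements merged into one kernel-verified Lean document; each statement's English description precedes it below -/
import Mathlib

section
/- Let f and g be real-valued functions on ℝ that are periodic with period 1, integrable on [0,1], and satisfy ∫₀¹ f(t) dt = ∫₀¹ g(t) dt = 1. Then for every r ∈ [0,1] there exist x ∈ ℝ and t ∈ [0,1] such that ∫ₓ^{x+t} f(s) ds = ∫ₓ^{x+t} g(s) ds = r. -/
/-!
Let `F`, `G` be primitives of `f`, `g`. Then `F (x + 1) = F x + 1`, `G (x + 1) = G x + 1`, and
`W = F - G` is continuous and `1`-periodic; let `p` be a maximum point and `q` a minimum point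
of `W`. For `x` on the segment from `p` to `q` and `t ∈ [0, 1]` put
`P (x, t) = W (x + t) - W x` and `Q (x, t) = (F + G) (x + t) - (F + G) x - 2 r`.
Then `P ≤ 0` at `x = p`, `P ≥ 0` at `x = q`, `Q = -2 r ≤ 0` at `t = 0` and `Q = 2 - 2 r ≥ 0` at
`t = 1`, so by the Poincaré–Miranda theorem `P` and `Q` have a common zero, which is the arc.

The planar Poincaré–Miranda theorem follows from a Sperner-type parity argument on a grid
(a cell carrying all three labels yields nearby points on which `P` and `Q` have the right
signs) and compactness.
-/

section Sperner

open Finset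

def spernerDoor (a b : Fin 3) : ZMod 2 := if (a = 0 ∧ b = 1) ∨ (a = 1 ∧ b = 0) then 1 else 0

lemma spernerDoor_square_eq_zero (a b c d : Fin 3)
    (h : ¬ ∀ k : Fin 3, k = a ∨ k = b ∨ k = c ∨ k = d) :
    spernerDoor a b + spernerDoor c d + spernerDoor a c + spernerDoor b d = 0 := by
  revert a b c d; decide

lemma spernerDoor_eq_zero_of_ne_zero {a b : Fin 3} (ha : a ≠ 0) (hb : b ≠ 0) :
    spernerDoor a b = 0 := by
  revert a b; decide

lemma spernerDoor_eq_zero_of_ne_one {a b : Fin 3} (ha : a ≠ 1) (hb : b ≠ 1) :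
    spernerDoor a b = 0 := by
  revert a b; decide

lemma spernerDoor_eq_of_ne_two {a b : Fin 3} (ha : a ≠ 2) (hb : b ≠ 2) :
    spernerDoor a b = (if a = 1 then 1 else 0) + (if b = 1 then 1 else 0) := by
  revert a b; decide

lemma sum_range_add_succ_of_charTwo {R : Type*} [Ring R] [CharP R 2] (f : ℕ → R) (n : ℕ) :
    ∑ i ∈ range n, (f i + f (i + 1)) = f 0 + f n := by
  simp_rw [← CharTwo.sub_eq_add, sum_range_sub' f n]

theorem exists_fully_labelled_cell {n : ℕ} (L : ℕ → ℕ → Fin 3)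
    (hbot : ∀ i ≤ n, L i 0 = 1) (htop : ∀ i ≤ n, L i n ≠ 1)
    (hleft : ∀ j ≤ n, L 0 j ≠ 2) (hright : ∀ j ≤ n, L n j ≠ 0) :
    ∃ i < n, ∃ j < n, ∀ k : Fin 3,
      ∃ a b, (a = i ∨ a = i + 1) ∧ (b = j ∨ b = j + 1) ∧ L a b = k := by
  by_contra hnone
  -- `V i` counts mod 2 the doors (edges labelled `{0, 1}`) on column `i`. A cell missing a label
  -- has an even number of doors on its boundary, so `V` is constant; but `V 0 = 1` and `V n = 0`.
  obtain ⟨V, hV⟩ :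
      ∃ V : ℕ → ZMod 2, ∀ i, V i = ∑ j ∈ range n, spernerDoor (L i j) (L i (j + 1)) :=
    ⟨_, fun _ => rfl⟩
  have hstep : ∀ i < n, V i = V (i + 1) := by
    intro i hi
    have hsquare : ∀ j ∈ range n,
        spernerDoor (L i j) (L (i + 1) j) + spernerDoor (L i (j + 1)) (L (i + 1) (j + 1))
          + spernerDoor (L i j) (L i (j + 1))
          + spernerDoor (L (i + 1) j) (L (i + 1) (j + 1)) = 0 := by
      intro j hj
      refine spernerDoor_square_eq_zero _ _ _ _ fun hfull =>
        hnone ⟨i, hi, j, mem_range.mp hj, fun k => ?_⟩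
      rcases hfull k with h | h | h | h
      exacts [⟨i, j, by simp, by simp, h.symm⟩, ⟨i + 1, j, by simp, by simp, h.symm⟩,
        ⟨i, j + 1, by simp, by simp, h.symm⟩, ⟨i + 1, j + 1, by simp, by simp, h.symm⟩]
    have hsum := sum_congr rfl hsquare
    rw [sum_const_zero, sum_add_distrib, sum_add_distrib,
      sum_range_add_succ_of_charTwo (fun j => spernerDoor (L i j) (L (i + 1) j)),
      hbot i hi.le, hbot (i + 1) hi, show spernerDoor 1 1 = 0 from rfl,
      spernerDoor_eq_zero_of_ne_one (htop i hi.le) (htop (i + 1) hi), zero_add, zero_add,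
      ← hV, ← hV] at hsum
    exact CharTwo.add_eq_zero.mp hsum
  have hend : V 0 = V n := by
    suffices ∀ i ≤ n, V 0 = V i from this n le_rfl
    intro i hi
    induction i with
    | zero => rfl
    | succ i ih => rw [ih (by omega), hstep i (by omega)]
  have hright0 : V n = 0 :=
    (hV n).trans <| sum_eq_zero fun j hj =>
      spernerDoor_eq_zero_of_ne_zero (hright j (by simp at hj; omega))
        (hright (j + 1) (by simp at hj; omega))
  have hleft1 : V 0 = 1 := by
    have hcorner : L 0 n = 0 := by
      have := htop 0 (Nat.zero_le n); have := hleft n le_rfl; omega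
    rw [hV, sum_congr rfl fun j hj => spernerDoor_eq_of_ne_two (hleft j (by simp at hj; omega))
      (hleft (j + 1) (by simp at hj; omega)), sum_range_add_succ_of_charTwo
      (fun j => if L 0 j = 1 then (1 : ZMod 2) else 0), hbot 0 (Nat.zero_le n), hcorner]
    decide
  exact absurd (hleft1.symm.trans (hend.trans hright0)) (by decide)

end Sperner

open Set

theorem IsCompact.inter_inter_nonempty_of_forall_dist_lt {X : Type*} [MetricSpace X]
    {A B C : Set X} (hA : IsCompact A) (hB : IsCompact B) (hC : IsCompact C)
    (h : ∀ ε > 0, ∃ a ∈ A, ∃ b ∈ B, ∃ c ∈ C, dist a b < ε ∧ dist a c < ε) :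
    (A ∩ B ∩ C).Nonempty := by
  obtain ⟨a, ha, b, hb, c, hc, -⟩ := h 1 one_pos
  obtain ⟨m, ⟨hm₁, hm₂, hm₃⟩, hmin⟩ := (hA.prod (hB.prod hC)).exists_isMinOn
    (f := fun x => dist x.1 x.2.1 + dist x.1 x.2.2) ⟨(a, b, c), ha, hb, hc⟩
    (by fun_prop)
  have hzero : dist m.1 m.2.1 + dist m.1 m.2.2 ≤ 0 := by
    refine le_of_forall_pos_lt_add fun ε hε => ?_
    obtain ⟨a, ha, b, hb, c, hc, hab, hac⟩ := h (ε / 2) (half_pos hε)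
    have := isMinOn_iff.mp hmin (a, b, c) ⟨ha, hb, hc⟩
    dsimp only at this
    linarith
  have hb : m.1 = m.2.1 := dist_le_zero.mp (by linarith [dist_nonneg (x := m.1) (y := m.2.2)])
  have hc : m.1 = m.2.2 := dist_le_zero.mp (by linarith [dist_nonneg (x := m.1) (y := m.2.1)])
  exact ⟨m.1, ⟨hm₁, hb ▸ hm₂⟩, hc ▸ hm₃⟩

noncomputable def gridPoint (n i j : ℕ) : ℝ × ℝ := ((i : ℝ) / n, (j : ℝ) / n)

lemma gridPoint_mem {n i j : ℕ} (hi : i ≤ n) (hj : j ≤ n) :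
    gridPoint n i j ∈ Icc (0 : ℝ) 1 ×ˢ Icc (0 : ℝ) 1 :=
  ⟨⟨div_nonneg i.cast_nonneg n.cast_nonneg,
      div_le_one_of_le₀ (by exact_mod_cast hi) n.cast_nonneg⟩,
    ⟨div_nonneg j.cast_nonneg n.cast_nonneg,
      div_le_one_of_le₀ (by exact_mod_cast hj) n.cast_nonneg⟩⟩

lemma dist_div_le_of_adjacent (n : ℕ) {i a a' : ℕ} (ha : a = i ∨ a = i + 1)
    (ha' : a' = i ∨ a' = i + 1) :
    dist ((a : ℝ) / n) ((a' : ℝ) / n) ≤ 1 / n := by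
  rw [Real.dist_eq, ← sub_div, abs_div, Nat.abs_cast]
  gcongr
  rcases ha with rfl | rfl <;> rcases ha' with rfl | rfl <;> norm_num

lemma dist_gridPoint_le (n : ℕ) {i j a b a' b' : ℕ} (ha : a = i ∨ a = i + 1)
    (hb : b = j ∨ b = j + 1) (ha' : a' = i ∨ a' = i + 1) (hb' : b' = j ∨ b' = j + 1) :
    dist (gridPoint n a b) (gridPoint n a' b') ≤ 1 / n :=
  max_le (dist_div_le_of_adjacent n ha ha') (dist_div_le_of_adjacent n hb hb')

noncomputable def mirandaLabel (P Q : ℝ × ℝ → ℝ) (n i j : ℕ) : Fin 3 :=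
  if j = 0 ∨ (j ≠ n ∧ Q (gridPoint n i j) < 0) then 1
  else if i ≠ n ∧ P (gridPoint n i j) ≤ 0 then 0 else 2

section PoincareMiranda

variable {P Q : ℝ × ℝ → ℝ}

lemma Q_gridPoint_nonpos_of_mirandaLabel_eq_one (hQb : ∀ x ∈ Icc (0 : ℝ) 1, Q (x, 0) ≤ 0)
    {n i j : ℕ} (hi : i ≤ n) (h : mirandaLabel P Q n i j = 1) : Q (gridPoint n i j) ≤ 0 := by
  unfold mirandaLabel at h
  split_ifs at h with h₁ h₂ <;> try exact absurd h (by decide)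
  rcases h₁ with rfl | ⟨-, hneg⟩
  · simpa [gridPoint] using hQb _ (gridPoint_mem hi (Nat.zero_le n)).1
  · exact hneg.le

lemma Q_gridPoint_nonneg_of_mirandaLabel_ne_one (hQt : ∀ x ∈ Icc (0 : ℝ) 1, 0 ≤ Q (x, 1))
    {n i j : ℕ} (hi : i ≤ n) (hj : j ≤ n) (h : mirandaLabel P Q n i j ≠ 1) :
    0 ≤ Q (gridPoint n i j) := by
  obtain ⟨hj₀, hQ⟩ := not_or.mp fun h₁ => h (if_pos h₁)
  rcases eq_or_ne j n with rfl | hjn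
  · simpa [gridPoint, hj₀] using hQt _ (gridPoint_mem hi le_rfl).1
  · exact not_lt.mp fun hlt => hQ ⟨hjn, hlt⟩

lemma P_gridPoint_nonpos_of_mirandaLabel_eq_zero {n i j : ℕ} (h : mirandaLabel P Q n i j = 0) :
    P (gridPoint n i j) ≤ 0 := by
  unfold mirandaLabel at h
  split_ifs at h with h₁ h₂ <;> try exact absurd h (by decide)
  exact h₂.2

lemma P_gridPoint_nonneg_of_mirandaLabel_eq_two (hPr : ∀ y ∈ Icc (0 : ℝ) 1, 0 ≤ P (1, y))
    {n i j : ℕ} (hn : 0 < n) (hj : j ≤ n) (h : mirandaLabel P Q n i j = 2) :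
    0 ≤ P (gridPoint n i j) := by
  unfold mirandaLabel at h
  split_ifs at h with h₁ h₂ <;> try exact absurd h (by decide)
  rcases not_and_or.mp h₂ with hi | hP
  · rw [not_not.mp hi]
    simpa [gridPoint, hn.ne'] using hPr _ (gridPoint_mem le_rfl hj).2
  · exact (not_le.mp hP).le

theorem exists_near_gridPoints (hPl : ∀ y ∈ Icc (0 : ℝ) 1, P (0, y) ≤ 0)
    (hPr : ∀ y ∈ Icc (0 : ℝ) 1, 0 ≤ P (1, y)) (hQb : ∀ x ∈ Icc (0 : ℝ) 1, Q (x, 0) ≤ 0)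
    (hQt : ∀ x ∈ Icc (0 : ℝ) 1, 0 ≤ Q (x, 1)) {n : ℕ} (hn : 0 < n) :
    ∃ a ∈ Icc (0 : ℝ) 1 ×ˢ Icc (0 : ℝ) 1, ∃ b ∈ Icc (0 : ℝ) 1 ×ˢ Icc (0 : ℝ) 1,
      ∃ c ∈ Icc (0 : ℝ) 1 ×ˢ Icc (0 : ℝ) 1, (P a ≤ 0 ∧ 0 ≤ Q a) ∧ Q b ≤ 0 ∧ 0 ≤ P c ∧
        dist a b ≤ 1 / n ∧ dist a c ≤ 1 / n := by
  have hbot : ∀ i ≤ n, mirandaLabel P Q n i 0 = 1 := fun i _ => if_pos (Or.inl rfl)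
  have htop : ∀ i ≤ n, mirandaLabel P Q n i n ≠ 1 := by
    intro i _
    unfold mirandaLabel
    rw [if_neg (by omega)]
    split_ifs <;> decide
  have hleft : ∀ j ≤ n, mirandaLabel P Q n 0 j ≠ 2 := by
    intro j hj
    have hP : P (gridPoint n 0 j) ≤ 0 := by
      simpa [gridPoint] using hPl _ (gridPoint_mem hn.le hj).2
    unfold mirandaLabel
    split_ifs with h₁ h₂ <;> first | decide | exact absurd ⟨hn.ne, hP⟩ h₂
  have hright : ∀ j ≤ n, mirandaLabel P Q n n j ≠ 0 := by
    intro j _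
    unfold mirandaLabel
    split_ifs with h₁ h₂ <;> first | decide | exact absurd rfl h₂.1
  obtain ⟨i, hi, j, hj, hcell⟩ := exists_fully_labelled_cell _ hbot htop hleft hright
  obtain ⟨a₀, b₀, ha₀, hb₀, h₀⟩ := hcell 0
  obtain ⟨a₁, b₁, ha₁, hb₁, h₁⟩ := hcell 1
  obtain ⟨a₂, b₂, ha₂, hb₂, h₂⟩ := hcell 2
  refine ⟨gridPoint n a₀ b₀, gridPoint_mem (by omega) (by omega),
    gridPoint n a₁ b₁, gridPoint_mem (by omega) (by omega),
    gridPoint n a₂ b₂, gridPoint_mem (by omega) (by omega),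
    ⟨P_gridPoint_nonpos_of_mirandaLabel_eq_zero h₀,
      Q_gridPoint_nonneg_of_mirandaLabel_ne_one hQt (by omega) (by omega) (by rw [h₀]; decide)⟩,
    Q_gridPoint_nonpos_of_mirandaLabel_eq_one hQb (by omega) h₁,
    P_gridPoint_nonneg_of_mirandaLabel_eq_two hPr hn (by omega) h₂,
    dist_gridPoint_le n ha₀ hb₀ ha₁ hb₁, dist_gridPoint_le n ha₀ hb₀ ha₂ hb₂⟩

theorem exists_eq_zero_of_unitSquare (hP : ContinuousOn P (Icc (0 : ℝ) 1 ×ˢ Icc (0 : ℝ) 1))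
    (hQ : ContinuousOn Q (Icc (0 : ℝ) 1 ×ˢ Icc (0 : ℝ) 1))
    (hPl : ∀ y ∈ Icc (0 : ℝ) 1, P (0, y) ≤ 0) (hPr : ∀ y ∈ Icc (0 : ℝ) 1, 0 ≤ P (1, y))
    (hQb : ∀ x ∈ Icc (0 : ℝ) 1, Q (x, 0) ≤ 0) (hQt : ∀ x ∈ Icc (0 : ℝ) 1, 0 ≤ Q (x, 1)) :
    ∃ z ∈ Icc (0 : ℝ) 1 ×ˢ Icc (0 : ℝ) 1, P z = 0 ∧ Q z = 0 := by
  set S := Icc (0 : ℝ) 1 ×ˢ Icc (0 : ℝ) 1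
  have hS : IsCompact S := isCompact_Icc.prod isCompact_Icc
  have hcompact : ∀ {h : ℝ × ℝ → ℝ} {t : Set ℝ}, ContinuousOn h S → IsClosed t →
      IsCompact (S ∩ h ⁻¹' t) := fun hh ht =>
    hS.of_isClosed_subset (hh.preimage_isClosed_of_isClosed hS.isClosed ht) inter_subset_left
  have happrox : ∀ ε > 0, ∃ a ∈ (S ∩ P ⁻¹' Iic 0) ∩ (S ∩ Q ⁻¹' Ici 0), ∃ b ∈ S ∩ Q ⁻¹' Iic 0,
      ∃ c ∈ S ∩ P ⁻¹' Ici 0, dist a b < ε ∧ dist a c < ε := by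
    intro ε hε
    obtain ⟨n, hn⟩ := exists_nat_gt (1 / ε)
    have hn₀ : (0 : ℝ) < n := (one_div_pos.mpr hε).trans hn
    have hmesh : 1 / (n : ℝ) < ε := by rwa [div_lt_comm₀ hn₀ hε]
    obtain ⟨a, haS, b, hbS, c, hcS, ⟨hPa, hQa⟩, hQb, hPc, hab, hac⟩ :=
      exists_near_gridPoints hPl hPr hQb hQt (n := n) (by exact_mod_cast hn₀)
    exact ⟨a, ⟨⟨haS, hPa⟩, haS, hQa⟩, b, ⟨hbS, hQb⟩, c, ⟨hcS, hPc⟩,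
      hab.trans_lt hmesh, hac.trans_lt hmesh⟩
  obtain ⟨z, ⟨⟨⟨hzS, hPz⟩, -, hQz⟩, -, hQz'⟩, -, hPz'⟩ :=
    IsCompact.inter_inter_nonempty_of_forall_dist_lt
      ((hcompact hP isClosed_Iic).inter (hcompact hQ isClosed_Ici))
      (hcompact hQ isClosed_Iic) (hcompact hP isClosed_Ici) happrox
  exact ⟨z, hzS, le_antisymm hPz hPz', le_antisymm hQz' hQz⟩

end PoincareMiranda

theorem exists_common_chord {F G : ℝ → ℝ} (hF : Continuous F) (hG : Continuous G)
    (hF₁ : ∀ x, F (x + 1) = F x + 1) (hG₁ : ∀ x, G (x + 1) = G x + 1)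
    {r : ℝ} (hr : r ∈ Icc (0 : ℝ) 1) :
    ∃ x t : ℝ, t ∈ Icc (0 : ℝ) 1 ∧ F (x + t) - F x = r ∧ G (x + t) - G x = r := by
  set W := fun x => F x - G x with hW
  have hWp : Function.Periodic W 1 := fun x => by simp only [hW, hF₁, hG₁]; ring
  have hrange := hWp.compact_of_continuous one_ne_zero (hF.sub hG)
  obtain ⟨_, ⟨p, rfl⟩, hp⟩ := hrange.exists_isGreatest (range_nonempty W)
  obtain ⟨_, ⟨q, rfl⟩, hq⟩ := hrange.exists_isLeast (range_nonempty W)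
  set x : ℝ × ℝ → ℝ := fun z => p + (q - p) * z.1 with hx
  obtain ⟨z, ⟨-, ht⟩, hPz, hQz⟩ := exists_eq_zero_of_unitSquare
    (P := fun z => W (x z + z.2) - W (x z))
    (Q := fun z => F (x z + z.2) + G (x z + z.2) - (F (x z) + G (x z)) - 2 * r)
    (by fun_prop) (by fun_prop)
    (fun t _ => by simpa [hx] using hp ⟨p + t, rfl⟩)
    (fun t _ => by simpa [hx] using hq ⟨q + t, rfl⟩)
    (fun _ _ => by simp only [add_zero]; linarith [hr.1])
    (fun _ _ => by simp only [hF₁, hG₁]; linarith [hr.2])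
  refine ⟨x z, z.2, ht, ?_, ?_⟩ <;> simp only [hW] at hPz hQz <;> linarith

/-- Corollary 2 (circle version): if `f, g` are `1`-periodic, integrable on `[0,1]`,
with `∫₀¹ f = ∫₀¹ g = 1`, then for every `r ∈ [0,1]` there is an arc `[x, x+t]`
(`0 ≤ t ≤ 1`) on which both integrals equal `r`. -/
theorem totik_circle
    (f g : ℝ → ℝ)
    (hfp : Function.Periodic f 1) (hgp : Function.Periodic g 1)
    (hf : IntervalIntegrable f MeasureTheory.volume 0 1)
    (hg : IntervalIntegrable g MeasureTheory.volume 0 1)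
    (hf1 : (∫ t in (0:ℝ)..1, f t) = 1)
    (hg1 : (∫ t in (0:ℝ)..1, g t) = 1)
    (r : ℝ) (hr : r ∈ Set.Icc (0:ℝ) 1) :
    ∃ x t : ℝ, t ∈ Set.Icc (0:ℝ) 1 ∧
      (∫ s in x..(x + t), f s) = r ∧ (∫ s in x..(x + t), g s) = r := by
  have hfI := hfp.intervalIntegrable₀ one_ne_zero hf
  have hgI := hgp.intervalIntegrable₀ one_ne_zero hg
  obtain ⟨x, t, ht, hF, hG⟩ := exists_common_chord
    (intervalIntegral.continuous_primitive hfI 0) (intervalIntegral.continuous_primitive hgI 0)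
    (fun x => by rw [hfp.intervalIntegral_add_eq_add 0 x hfI, zero_add, hf1])
    (fun x => by rw [hgp.intervalIntegral_add_eq_add 0 x hgI, zero_add, hg1]) hr
  refine ⟨x, t, ht, ?_, ?_⟩
  · rwa [← intervalIntegral.integral_interval_sub_left (hfI 0 _) (hfI 0 x)]
  · rwa [← intervalIntegral.integral_interval_sub_left (hgI 0 _) (hgI 0 x)]
end

section
/- Let r ∈ (0,1) be a real number that is not equal to 1/k for any positive integer k. Then there exist functions f and g, integrable on [0,1] with ∫₀¹ f(t) dt = ∫₀¹ g(t) dt = 1, such that there is no pair a, b with 0 ≤ a ≤ b ≤ 1 satisfying ∫ₐᵇ f(t) dt = ∫ₐᵇ g(t) dt = r. -/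
open Real MeasureTheory

lemma integral_sin_cmul (c : ℝ) (hc : c ≠ 0) (a b : ℝ) :
    ∫ x in a..b, Real.sin (c * x) = (Real.cos (c * a) - Real.cos (c * b)) / c := by
  rw [intervalIntegral.integral_comp_mul_left (fun x => Real.sin x) hc, integral_sin,
    smul_eq_mul]
  ring

/-- Corollary 3 (second part): if `r ∈ (0,1)` is not of the form `1/k` for a
positive integer `k`, then there are integrable functions `f, g` on `[0,1]`
with `∫₀¹ f = ∫₀¹ g = 1` admitting no subinterval `[a,b] ⊆ [0,1]` on which
both integrals equal `r`. -/
theorem chord_counterexample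
    (r : ℝ) (hr : r ∈ Set.Ioo (0:ℝ) 1)
    (hrk : ∀ k : ℕ, 0 < k → r ≠ 1 / (k : ℝ)) :
    ∃ f g : ℝ → ℝ,
      IntervalIntegrable f MeasureTheory.volume 0 1 ∧
      IntervalIntegrable g MeasureTheory.volume 0 1 ∧
      (∫ t in (0:ℝ)..1, f t) = 1 ∧
      (∫ t in (0:ℝ)..1, g t) = 1 ∧
      ¬ ∃ a b : ℝ, 0 ≤ a ∧ a ≤ b ∧ b ≤ 1 ∧
        (∫ t in a..b, f t) = r ∧ (∫ t in a..b, g t) = r := by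
  obtain ⟨hr0, hr1⟩ := hr
  have hrne : r ≠ 0 := ne_of_gt hr0
  have hπ : (0:ℝ) < π := Real.pi_pos
  have hs : Real.sin (π / r) ≠ 0 := by
    intro h
    rw [Real.sin_eq_zero_iff] at h
    obtain ⟨n, hn⟩ := h
    have hrinv : (1:ℝ) < 1 / r := by
      rw [lt_div_iff₀ hr0]; linarith
    have hnr : (n : ℝ) = 1 / r := by
      field_simp at hn ⊢
      nlinarith [hn]
    have hn1 : (1:ℝ) < (n:ℝ) := by rw [hnr]; exact hrinv
    have hnpos : 0 < n := by exact_mod_cast (by linarith : (0:ℝ) < n)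
    have hcast : ((n.toNat : ℕ) : ℝ) = (n : ℝ) := by
      exact_mod_cast Int.toNat_of_nonneg hnpos.le
    have : r = 1 / ((n.toNat : ℕ) : ℝ) := by rw [hcast, hnr, one_div_one_div]
    exact hrk n.toNat (by omega) this
  set s : ℝ := Real.sin (π / r) with hs_def
  set c : ℝ := 2 * π / r with hc_def
  have hcne : c ≠ 0 := by
    rw [hc_def]
    positivity
  have hgcont : Continuous (fun x : ℝ => 1 - s ^ 2 + (π / r) * Real.sin (c * x)) := by
    fun_prop
  have hcomp : ∀ a b : ℝ, (∫ t in a..b, (1 - s ^ 2 + (π / r) * Real.sin (c * t))) =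
      (b - a) * (1 - s ^ 2) + (π / r) * ((Real.cos (c * a) - Real.cos (c * b)) / c) := by
    intro a b
    rw [intervalIntegral.integral_add intervalIntegrable_const
      (Continuous.intervalIntegrable (by fun_prop) a b),
      intervalIntegral.integral_const,
      intervalIntegral.integral_const_mul, integral_sin_cmul c hcne, smul_eq_mul]
  refine ⟨fun _ => 1, fun x => 1 - s ^ 2 + (π / r) * Real.sin (c * x), ?_, ?_, ?_, ?_, ?_⟩
  · exact intervalIntegrable_const
  · exact hgcont.intervalIntegrable 0 1
  · simp
  · rw [hcomp]
    have hc1 : c * 1 = π / r + π / r := by rw [hc_def]; ring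
    rw [mul_zero, Real.cos_zero, hc1, Real.cos_add]
    have hpy : Real.sin (π / r) ^ 2 + Real.cos (π / r) ^ 2 = 1 := Real.sin_sq_add_cos_sq _
    have h2 : 1 - (Real.cos (π/r) * Real.cos (π/r) - Real.sin (π/r) * Real.sin (π/r))
        = 2 * s ^ 2 := by rw [hs_def]; nlinarith [hpy]
    rw [h2, hc_def]
    field_simp
    ring
  · rintro ⟨a, b, _, _, _, hf, hg⟩
    rw [intervalIntegral.integral_const, smul_eq_mul, mul_one] at hf
    rw [hcomp] at hg
    have hb : b = a + r := by linarith
    have hcos : Real.cos (c * b) = Real.cos (c * a) := by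
      have hcb : c * b = c * a + 2 * π := by
        rw [hb, hc_def]; field_simp
      rw [hcb, Real.cos_add_two_pi]
    rw [hcos, hf, sub_self, zero_div, mul_zero, add_zero] at hg
    have hz : r * s ^ 2 = 0 := by linarith [hg]
    rcases mul_eq_zero.mp hz with h | h
    · exact hrne h
    · exact hs (pow_eq_zero_iff (n := 2) (by norm_num) |>.mp h)
end

section
/- Let f be a function integrable on [0,1] with ∫₀¹ f(t) dt = 1, and let k be a positive integer. Then there exists x ∈ [0, 1 − 1/k] such that ∫ₓ^{x+1/k} f(t) dt = 1/k. -/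
/-- If `f` is integrable on `[0,1]` with `∫₀¹ f = 1` and `k` is a positive
integer, then there is an interval `[x, x + 1/k] ⊆ [0,1]` of length `1/k` on
which the integral of `f` equals `1/k`. -/
theorem interval_of_length_one_over_k
    (f : ℝ → ℝ)
    (hf : IntervalIntegrable f MeasureTheory.volume 0 1)
    (hf1 : (∫ t in (0:ℝ)..1, f t) = 1)
    (k : ℕ) (hk : 0 < k) :
    ∃ x : ℝ, x ∈ Set.Icc (0:ℝ) (1 - 1 / (k : ℝ)) ∧
      (∫ t in x..(x + 1 / (k : ℝ)), f t) = 1 / (k : ℝ) := by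
  have hk0 : (0:ℝ) < (k:ℝ) := by exact_mod_cast hk
  set c : ℝ := 1 / (k:ℝ) with hc_def
  have hc : 0 < c := by positivity
  have hkc : (k:ℝ) * c = 1 := by rw [hc_def]; field_simp
  have hc1 : c ≤ 1 := by
    rw [hc_def]
    rw [div_le_one hk0]
    exact_mod_cast hk
  set F : ℝ → ℝ := fun x => ∫ t in (0:ℝ)..x, f t with hF_def
  have hIcc : MeasureTheory.IntegrableOn f (Set.Icc 0 1) MeasureTheory.volume :=
    (intervalIntegrable_iff_integrableOn_Icc_of_le zero_le_one).mp hf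
  have hFc : ContinuousOn F (Set.Icc 0 1) := by
    have := intervalIntegral.continuousOn_primitive_interval
      (a := (0:ℝ)) (b := (1:ℝ)) (f := f) (μ := MeasureTheory.volume)
      (by rwa [Set.uIcc_of_le zero_le_one])
    rwa [Set.uIcc_of_le zero_le_one] at this
  -- integrability on subintervals
  have hint : ∀ x ∈ Set.Icc (0:ℝ) 1, IntervalIntegrable f MeasureTheory.volume 0 x := by
    intro x hx
    exact hf.mono_set (by
      rw [Set.uIcc_of_le hx.1, Set.uIcc_of_le zero_le_one]
      exact Set.Icc_subset_Icc le_rfl hx.2)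
  set g : ℝ → ℝ := fun x => F (x + c) - F x with hg_def
  have hmem : ∀ x ∈ Set.Icc (0:ℝ) (1 - c), x + c ∈ Set.Icc (0:ℝ) 1 ∧ x ∈ Set.Icc (0:ℝ) 1 := by
    intro x hx
    constructor
    · constructor
      · linarith [hx.1, hc.le]
      · linarith [hx.2]
    · exact ⟨hx.1, by linarith [hx.2, hc.le]⟩
  have hgval : ∀ x ∈ Set.Icc (0:ℝ) (1 - c), g x = ∫ t in x..(x + c), f t := by
    intro x hx
    obtain ⟨h1, h2⟩ := hmem x hx
    exact intervalIntegral.integral_interval_sub_left (hint _ h1) (hint _ h2)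
  have hgc : ContinuousOn g (Set.Icc 0 (1 - c)) := by
    apply ContinuousOn.sub
    · apply hFc.comp (continuous_add_right c).continuousOn
      intro x hx; exact (hmem x hx).1
    · exact hFc.mono (fun x hx => (hmem x hx).2)
  -- telescoping sum
  have hF1 : F 1 = 1 := hf1
  have hF0 : F 0 = 0 := by simp [hF_def]
  have hsum : ∑ i ∈ Finset.range k, g ((i:ℝ) * c) = 1 := by
    have := Finset.sum_range_sub (fun i : ℕ => F ((i:ℝ) * c)) k
    simp only [hkc, Nat.cast_zero, zero_mul] at this
    calc ∑ i ∈ Finset.range k, g ((i:ℝ) * c)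
        = ∑ i ∈ Finset.range k, (F (((i:ℕ)+1:ℕ) * c) - F ((i:ℝ) * c)) := by
          apply Finset.sum_congr rfl; intro i _
          simp [hg_def]; ring_nf
      _ = F 1 - F 0 := this
      _ = 1 := by rw [hF1, hF0]; ring
  have hgridmem : ∀ i ∈ Finset.range k, ((i:ℝ) * c) ∈ Set.Icc (0:ℝ) (1 - c) := by
    intro i hi
    rw [Finset.mem_range] at hi
    constructor
    · positivity
    · have : (i:ℝ) ≤ (k:ℝ) - 1 := by
        have : (i:ℝ) + 1 ≤ (k:ℝ) := by exact_mod_cast hi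
        linarith
      calc (i:ℝ) * c ≤ ((k:ℝ) - 1) * c := by nlinarith
        _ = 1 - c := by rw [sub_mul, hkc, one_mul]
  -- existence of points above and below c
  have hne : (Finset.range k).Nonempty := ⟨0, Finset.mem_range.mpr hk⟩
  have hexle : ∃ i ∈ Finset.range k, g ((i:ℝ) * c) ≤ c := by
    by_contra h
    push_neg at h
    have := Finset.sum_lt_sum_of_nonempty hne (f := fun _ : ℕ => c) (g := fun i : ℕ => g ((i:ℝ) * c)) h
    rw [hsum] at this
    simp [Finset.sum_const, nsmul_eq_mul, hkc] at this
  have hexge : ∃ i ∈ Finset.range k, c ≤ g ((i:ℝ) * c) := by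
    by_contra h
    push_neg at h
    have := Finset.sum_lt_sum_of_nonempty hne (g := fun _ : ℕ => c) (f := fun i : ℕ => g ((i:ℝ) * c)) h
    rw [hsum] at this
    simp [Finset.sum_const, nsmul_eq_mul, hkc] at this
  obtain ⟨i, hi, hile⟩ := hexle
  obtain ⟨j, hj, hjge⟩ := hexge
  set a := (i:ℝ) * c
  set b := (j:ℝ) * c
  have ha := hgridmem i hi
  have hb := hgridmem j hj
  have hsub : Set.uIcc a b ⊆ Set.Icc (0:ℝ) (1 - c) := Set.uIcc_subset_Icc ha hb
  have : c ∈ g '' Set.uIcc a b := by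
    apply intermediate_value_uIcc (hgc.mono hsub)
    exact Set.mem_uIcc.mpr (Or.inl ⟨hile, hjge⟩)
  obtain ⟨x, hx, hgx⟩ := this
  have hxmem := hsub hx
  exact ⟨x, hxmem, by rw [← hgval x hxmem, hgx]⟩
end

section
/- Let F : ℝ → ℝ be a continuous function that is periodic with period 1. Then F has every chord; that is, for every t ∈ ℝ there exists x ∈ ℝ such that F(x + t) = F(x). -/
/-!
Since `F` is periodic and continuous it attains a global maximum at some `a` and a global
minimum at some `b`. Then `x ↦ F (x + t) - F x` is `≤ 0` at `a` and `≥ 0` at `b`, so it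
vanishes somewhere by the intermediate value theorem.
-/

open Set

section ChordOfExtrema

variable {X α : Type*} [TopologicalSpace X] [LinearOrder α] [TopologicalSpace α]

theorem Function.Periodic.exists_forall_ge_of_continuous [ClosedIciTopology α] {f : ℝ → α}
    {c : ℝ} (hp : Function.Periodic f c) (hc : c ≠ 0) (hf : Continuous f) :
    ∃ a, ∀ y, f y ≤ f a := by
  obtain ⟨_, ⟨a, rfl⟩, hmax⟩ :=
    (hp.compact_of_continuous hc hf).exists_isGreatest (range_nonempty f)
  exact ⟨a, fun y => hmax (mem_range_self y)⟩

theorem Function.Periodic.exists_forall_le_of_continuous [ClosedIicTopology α] {f : ℝ → α}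
    {c : ℝ} (hp : Function.Periodic f c) (hc : c ≠ 0) (hf : Continuous f) :
    ∃ b, ∀ y, f b ≤ f y := by
  obtain ⟨_, ⟨b, rfl⟩, hmin⟩ :=
    (hp.compact_of_continuous hc hf).exists_isLeast (range_nonempty f)
  exact ⟨b, fun y => hmin (mem_range_self y)⟩

theorem Continuous.exists_comp_apply_eq_apply_of_max_of_min [PreconnectedSpace X]
    [OrderClosedTopology α] {F : X → α} {g : X → X} (hF : Continuous F) (hg : Continuous g)
    {a b : X} (hmax : ∀ y, F y ≤ F a) (hmin : ∀ y, F b ≤ F y) :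
    ∃ x, F (g x) = F x :=
  intermediate_value_univ₂ (hF.comp hg) hF (hmax (g a)) (hmin (g b))

end ChordOfExtrema

/-- Every continuous `1`-periodic function `F : ℝ → ℝ` has every chord: for each
`t ∈ ℝ` there is `x ∈ ℝ` with `F (x + t) = F x`. -/
theorem continuous_periodic_has_every_chord
    (F : ℝ → ℝ) (hF : Continuous F) (hFp : Function.Periodic F 1)
    (t : ℝ) :
    ∃ x : ℝ, F (x + t) = F x := by
  obtain ⟨a, hmax⟩ := hFp.exists_forall_ge_of_continuous one_ne_zero hF
  obtain ⟨b, hmin⟩ := hFp.exists_forall_le_of_continuous one_ne_zero hF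
  exact hF.exists_comp_apply_eq_apply_of_max_of_min (continuous_add_const t) hmax hmin
end

section
/- Let f : ℝ → ℝ be periodic with period 1, integrable on [0,1], and satisfy ∫₀¹ f(t) dt = 0. Then the function F(x) = ∫₀ˣ f(t) dt has every chord; that is, for every t ∈ ℝ there exists x ∈ ℝ such that F(x + t) = F(x). -/
/-!
Since `∫₀¹ f = 0`, the primitive `F` of `f` is continuous and `1`-periodic, so it attains a global
maximum at some `a` and a global minimum at some `b`. The chord function `x ↦ F (x + t) - F x` is
then `≤ 0` at `a` and `≥ 0` at `b`, and the intermediate value theorem gives a zero.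
-/

open MeasureTheory Set

theorem exists_apply_add_eq_of_forall_le_of_forall_ge {G α : Type*} [TopologicalSpace G] [Add G]
    [ContinuousAdd G] [PreconnectedSpace G] [AddCommGroup α] [LinearOrder α]
    [IsOrderedAddMonoid α] [TopologicalSpace α] [OrderClosedTopology α] [ContinuousSub α]
    {g : G → α} (hg : Continuous g) {a b : G} (ha : ∀ y, g y ≤ g a) (hb : ∀ y, g b ≤ g y)
    (t : G) : ∃ x, g (x + t) = g x := by
  have hchord : Continuous fun x => g (x + t) - g x :=
    (hg.comp (continuous_add_const t)).sub hg
  obtain ⟨x, hx⟩ := intermediate_value_univ a b hchord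
    ⟨sub_nonpos.mpr (ha (a + t)), sub_nonneg.mpr (hb (b + t))⟩
  exact ⟨x, sub_eq_zero.mp hx⟩

theorem Function.Periodic.exists_apply_add_eq {α : Type*} [AddCommGroup α] [LinearOrder α]
    [IsOrderedAddMonoid α] [TopologicalSpace α] [OrderClosedTopology α] [ContinuousSub α]
    {g : ℝ → α} {c : ℝ} (hp : Function.Periodic g c) (hc : c ≠ 0) (hg : Continuous g) (t : ℝ) :
    ∃ x, g (x + t) = g x := by
  have hrange := hp.compact_of_continuous hc hg
  obtain ⟨-, ⟨a, rfl⟩, ha⟩ := hrange.exists_isGreatest (range_nonempty g)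
  obtain ⟨-, ⟨b, rfl⟩, hb⟩ := hrange.exists_isLeast (range_nonempty g)
  exact exists_apply_add_eq_of_forall_le_of_forall_ge hg (fun y => ha ⟨y, rfl⟩)
    (fun y => hb ⟨y, rfl⟩) t

theorem Function.Periodic.periodic_primitive_of_integral_eq_zero {E : Type*}
    [NormedAddCommGroup E] [NormedSpace ℝ E] {f : ℝ → E} {T : ℝ} (hf : Function.Periodic f T)
    (h_int : ∀ t₁ t₂, IntervalIntegrable f volume t₁ t₂) (h₀ : ∫ x in 0..T, f x = 0) (a : ℝ) :
    Function.Periodic (fun x => ∫ s in a..x, f s) T := fun x => by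
  simp only [hf.intervalIntegral_add_eq_add a x h_int, hf.intervalIntegral_add_eq a 0, zero_add,
    h₀, add_zero]

/-- If `f : ℝ → ℝ` is `1`-periodic, integrable on `[0,1]`, and `∫₀¹ f = 0`,
then `F x = ∫₀ˣ f` has every chord: for each `t ∈ ℝ` there is `x ∈ ℝ` with
`F (x + t) = F x`. -/
theorem primitive_of_periodic_has_every_chord
    (f : ℝ → ℝ)
    (hfp : Function.Periodic f 1)
    (hf : IntervalIntegrable f MeasureTheory.volume 0 1)
    (hf0 : (∫ t in (0:ℝ)..1, f t) = 0)
    (t : ℝ) :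
    ∃ x : ℝ, (∫ s in (0:ℝ)..(x + t), f s) = ∫ s in (0:ℝ)..x, f s := by
  have hint := hfp.intervalIntegrable₀ one_ne_zero hf
  exact (hfp.periodic_primitive_of_integral_eq_zero hint hf0 0).exists_apply_add_eq
    one_ne_zero (intervalIntegral.continuous_primitive hint 0) t
end

section
/- Let N be a positive integer and let c : Fin (4N) → Bool be a coloring of 4N beads (arranged in a row) such that exactly 2N beads have color true. Then there exists an index i with i + 2N ≤ 4N such that the window of 2N consecutive beads starting at i, i.e. the beads with indices i, i+1, …, i+2N−1, contains exactly N beads of color true (and hence exactly N of color false). -/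
/-!
Write `P k` for the number of white beads among the first `k`. The window starting at `i`
contains `P (i + 2N) - P i` white beads; moving it one step changes this count by at most one,
since `P` increases by `0` or `1` at each step. The windows starting at `0` and at `2N`
partition the row, so their counts add up to `2N` and lie on either side of `N`; a discrete
intermediate value argument then finds a window with exactly `N` white beads.
-/

open Finset

theorem Int.exists_eq_of_succ_le_add_one {f : ℕ → ℤ} {b : ℕ} {t : ℤ}
    (hf : ∀ i < b, f (i + 1) ≤ f i + 1) (h0 : f 0 ≤ t) (hb : t ≤ f b) :
    ∃ i ≤ b, f i = t := by
  induction b with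
  | zero => exact ⟨0, le_rfl, le_antisymm h0 hb⟩
  | succ b ih =>
    by_cases hb' : t ≤ f b
    · obtain ⟨i, hi, hfi⟩ := ih (fun i hi => hf i (by omega)) hb'
      exact ⟨i, by omega, hfi⟩
    · exact ⟨b + 1, le_rfl, by linarith [hf b b.lt_succ_self]⟩

theorem Int.exists_eq_of_abs_sub_le_one {f : ℕ → ℤ} {b : ℕ} {t : ℤ}
    (hf : ∀ i < b, |f (i + 1) - f i| ≤ 1)
    (ht : min (f 0) (f b) ≤ t ∧ t ≤ max (f 0) (f b)) :
    ∃ i ≤ b, f i = t := by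
  rcases le_total (f 0) (f b) with h | h
  · rw [min_eq_left h, max_eq_right h] at ht
    exact exists_eq_of_succ_le_add_one (fun i hi => by linarith [(abs_le.mp (hf i hi)).2]) ht.1 ht.2
  · rw [min_eq_right h, max_eq_left h] at ht
    obtain ⟨i, hi, hfi⟩ := exists_eq_of_succ_le_add_one (f := fun i => -f i) (t := -t)
      (fun i hi => by linarith [(abs_le.mp (hf i hi)).1]) (by linarith) (by linarith)
    exact ⟨i, hi, neg_inj.mp hfi⟩

namespace Necklace

variable {n : ℕ} (c : Fin n → Bool)

def prefixCount (k : ℕ) : ℕ := #{j | c j = true ∧ (j : ℕ) < k}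

theorem prefixCount_zero : prefixCount c 0 = 0 := by
  simp [prefixCount]

theorem prefixCount_of_le {k : ℕ} (hk : n ≤ k) : prefixCount c k = #{j | c j = true} := by
  unfold prefixCount
  congr 1
  ext j
  simp only [mem_filter, mem_univ, true_and, and_iff_left_iff_imp]
  intro
  omega

theorem prefixCount_mono : Monotone (prefixCount c) := fun _ _ hkl =>
  card_le_card fun _ => by
    simp only [mem_filter, mem_univ, true_and]
    exact fun ⟨hj, hjk⟩ => ⟨hj, hjk.trans_le hkl⟩

theorem prefixCount_succ_le (k : ℕ) : prefixCount c (k + 1) ≤ prefixCount c k + 1 := by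
  calc prefixCount c (k + 1)
        ≤ #(univ.filter (fun j => c j = true ∧ (j : ℕ) < k) ∪
            univ.filter (fun j : Fin n => (j : ℕ) = k)) :=
        card_le_card fun j => by
          simp only [mem_union, mem_filter, mem_univ, true_and]
          exact fun ⟨hj, hjk⟩ => (Nat.lt_succ_iff_lt_or_eq.mp hjk).imp (⟨hj, ·⟩) id
    _ ≤ prefixCount c k + #{j : Fin n | (j : ℕ) = k} := card_union_le _ _
    _ ≤ prefixCount c k + 1 := by
        gcongr
        exact card_le_one.mpr fun a ha b hb => Fin.ext (by simp_all)

theorem card_window_eq (i w : ℕ) :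
    #{j | c j = true ∧ i ≤ (j : ℕ) ∧ (j : ℕ) < i + w} =
      prefixCount c (i + w) - prefixCount c i := by
  unfold prefixCount
  rw [← card_sdiff_of_subset fun j => by
    simp only [mem_filter, mem_univ, true_and]
    exact fun ⟨hj, hji⟩ => ⟨hj, by omega⟩]
  congr 1
  ext j
  simp only [mem_sdiff, mem_filter, mem_univ, true_and]
  grind

theorem abs_window_succ_sub_le (i w : ℕ) :
    |((prefixCount c (i + 1 + w) : ℤ) - prefixCount c (i + 1)) -
      ((prefixCount c (i + w) : ℤ) - prefixCount c i)| ≤ 1 := by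
  have := prefixCount_mono c (Nat.le_add_right i 1)
  have := prefixCount_succ_le c i
  have := prefixCount_mono c (Nat.le_add_right (i + w) 1)
  have := prefixCount_succ_le c (i + w)
  rw [abs_le, show i + 1 + w = i + w + 1 by ring]
  omega

end Necklace

open Necklace in
theorem necklace_window_general
    (N : ℕ) (c : Fin (4 * N) → Bool)
    (hc : (Finset.univ.filter (fun j : Fin (4 * N) => c j = true)).card = 2 * N) :
    ∃ i : ℕ, i + 2 * N ≤ 4 * N ∧
      (Finset.univ.filter (fun j : Fin (4 * N) =>
        c j = true ∧ i ≤ (j : ℕ) ∧ (j : ℕ) < i + 2 * N)).card = N := by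
  simp only [card_window_eq]
  have hP0 : prefixCount c 0 = 0 := prefixCount_zero c
  have hPtotal : prefixCount c (2 * N + 2 * N) = 2 * N := (prefixCount_of_le c (by omega)).trans hc
  have hPmid := prefixCount_mono c (show 2 * N ≤ 2 * N + 2 * N by omega)
  obtain ⟨i, hi, hfi⟩ := Int.exists_eq_of_abs_sub_le_one
    (f := fun i => (prefixCount c (i + 2 * N) : ℤ) - prefixCount c i) (b := 2 * N) (t := N)
    (fun i _ => abs_window_succ_sub_le c i (2 * N)) (by simp only [zero_add]; omega)
  refine ⟨i, by omega, ?_⟩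
  have := prefixCount_mono c (show i ≤ i + 2 * N by omega)
  omega

/-- The necklace-of-pearls theorem (row version): given `4N` beads colored so that
exactly `2N` are `true`, there is a window of `2N` consecutive beads containing
exactly `N` beads of color `true`. -/
theorem necklace_window
    (N : ℕ) (hN : 0 < N) (c : Fin (4 * N) → Bool)
    (hc : (Finset.univ.filter (fun j : Fin (4 * N) => c j = true)).card = 2 * N) :
    ∃ i : ℕ, i + 2 * N ≤ 4 * N ∧
      (Finset.univ.filter (fun j : Fin (4 * N) =>
        c j = true ∧ i ≤ (j : ℕ) ∧ (j : ℕ) < i + 2 * N)).card = N :=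
  necklace_window_general N c hc
end

section
/- Let G be a finite connected simple graph in which every vertex has degree at least 2. Then G admits a double covering by semi-simple closed walks: there exist closed walks w₁, …, w_k in G such that (i) in each wᵢ, no two consecutive edges along the walk are equal, (ii) each edge of G occurs at most twice in the edge list of each wᵢ, and (iii) every edge of G occurs exactly twice in total, counted with multiplicity over the edge lists of w₁, …, w_k. -/
open SimpleGraph

namespace DCAux

variable {V : Type*} {G : SimpleGraph V}

/-- The walk following a permutation of darts for `n` steps. -/
def wN (σ : Equiv.Perm G.Dart) (hσ : ∀ d : G.Dart, (σ d).fst = d.snd) :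
    (n : ℕ) → (d : G.Dart) → G.Walk d.fst ((σ ^ n) d).fst
  | 0, d => Walk.nil.copy rfl (by simp)
  | n + 1, d =>
      (Walk.cons (show G.Adj d.fst (σ d).fst by rw [hσ d]; exact d.adj)
        (wN σ hσ n (σ d))).copy rfl (by rw [pow_succ]; rfl)

lemma wN_edges (σ : Equiv.Perm G.Dart) (hσ : ∀ d : G.Dart, (σ d).fst = d.snd) :
    ∀ (n : ℕ) (d : G.Dart),
      (wN σ hσ n d).edges = (List.range n).map (fun i => ((σ ^ i) d).edge)
  | 0, d => by simp [wN]
  | n + 1, d => by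
      rw [List.range_succ_eq_map]
      simp only [wN, Walk.edges_copy, Walk.edges_cons, List.map_cons, List.map_map,
        wN_edges σ hσ n (σ d)]
      rw [List.cons_eq_cons]
      refine ⟨?_, ?_⟩
      · rw [pow_zero, Equiv.Perm.one_apply, hσ d]
        rfl
      · apply List.map_congr_left
        intro i _
        show ((σ ^ i) (σ d)).edge = ((σ ^ (i + 1)) d).edge
        rw [pow_succ]; rfl

lemma count_map_range {β : Type*} [DecidableEq β] (g : ℕ → β) (e : β) :
    ∀ n : ℕ, ((List.range n).map g).count e = ((Finset.range n).filter (fun i => g i = e)).card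
  | 0 => by simp
  | n + 1 => by
      rw [List.range_succ, Finset.range_add_one, List.map_append, List.count_append,
        Finset.filter_insert]
      by_cases h : g n = e
      · rw [if_pos h, Finset.card_insert_of_notMem (by simp)]
        simp [count_map_range g e n, h]
      · rw [if_neg h]
        simp [count_map_range g e n, h, List.count_singleton']

lemma next_ne_self {α : Type*} [DecidableEq α] {l : List α} (hnd : l.Nodup)
    (hl : 2 ≤ l.length) {x : α} (hx : x ∈ l) : l.next x hx ≠ x := by
  obtain ⟨i, rfl⟩ := List.get_of_mem hx
  rw [show l.next (l.get i) hx = l.get ⟨(i.1 + 1) % l.length, Nat.mod_lt _ (i.1.zero_le.trans_lt i.2)⟩ from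
    List.next_getElem l hnd i.1 i.2]
  intro h
  have := (List.Nodup.get_inj_iff hnd).mp h
  have h2 := Fin.val_eq_val _ _ |>.mpr this
  simp only at h2
  rcases Nat.lt_or_ge (i.1 + 1) l.length with hlt | hge
  · rw [Nat.mod_eq_of_lt hlt] at h2; omega
  · have : i.1 + 1 = l.length := by omega
    rw [this, Nat.mod_self] at h2
    omega

end DCAux

set_option maxHeartbeats 1000000

/-- Lemma 7: a finite connected simple graph with all degrees at least `2` admits a
double covering by semi-simple closed walks: closed walks such that (i) no two
consecutive edges of any walk are equal, (ii) each edge occurs at most twice in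
the edge list of each walk, and (iii) each edge of `G` occurs exactly twice in
total over the edge lists of all the walks. -/
theorem double_cover_by_semisimple_closed_walks
    {V : Type*} [Fintype V] [DecidableEq V]
    (G : SimpleGraph V) [DecidableRel G.Adj]
    (hconn : G.Connected)
    (hdeg : ∀ v : V, 2 ≤ G.degree v) :
    ∃ (k : ℕ) (w : Fin k → Σ v : V, G.Walk v v),
      (∀ i : Fin k, List.Chain' (· ≠ ·) (w i).2.edges) ∧
      (∀ i : Fin k, ∀ e : Sym2 V, (w i).2.edges.count e ≤ 2) ∧
      (∀ e ∈ G.edgeSet, (∑ i : Fin k, (w i).2.edges.count e) = 2) := by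
  classical
  letI : LinearOrder V := LinearOrder.lift' (Fintype.equivFin V) (Fintype.equivFin V).injective
  set nl : V → List V := fun v => (G.neighborFinset v).sort (· ≤ ·) with hnl
  have hnd : ∀ v, (nl v).Nodup := fun v => (G.neighborFinset v).sort_nodup _
  have hmem : ∀ {v u : V}, G.Adj v u → u ∈ nl v := fun {v u} h => by
    simp only [nl, Finset.mem_sort, SimpleGraph.mem_neighborFinset]; exact h
  have hadj : ∀ {v u : V}, u ∈ nl v → G.Adj v u := fun {v u} h => by
    simpa only [nl, Finset.mem_sort, SimpleGraph.mem_neighborFinset] using h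
  have hlen : ∀ v, 2 ≤ (nl v).length := fun v => by
    rw [Finset.length_sort]; exact hdeg v
  -- the successor permutation on darts
  let σf : G.Dart → G.Dart := fun d =>
    ⟨(d.snd, (nl d.snd).next d.fst (hmem d.adj.symm)), hadj (List.next_mem (nl d.snd) d.fst (hmem d.adj.symm))⟩
  have hinj : Function.Injective σf := by
    rintro ⟨⟨a1, b1⟩, h1⟩ ⟨⟨a2, b2⟩, h2⟩ h
    have hp := congrArg SimpleGraph.Dart.toProd h
    have hb : b1 = b2 := congrArg Prod.fst hp
    subst hb
    have he : (nl b1).next a1 (hmem h1.symm) = (nl b1).next a2 (hmem h2.symm) :=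
      congrArg Prod.snd hp
    have ha : a1 = a2 := by
      have p1 := List.prev_next (nl b1) (hnd b1) a1 (hmem h1.symm)
      have p2 := List.prev_next (nl b1) (hnd b1) a2 (hmem h2.symm)
      rw [← p1, ← p2]
      congr 1
    subst ha
    rfl
  let σ : Equiv.Perm G.Dart := Equiv.ofBijective σf (Finite.injective_iff_bijective.mp hinj)
  have hσ1 : ∀ d : G.Dart, (σ d).fst = d.snd := fun d => rfl
  have hkey : ∀ d : G.Dart, (σ d).edge ≠ d.edge := by
    intro d h
    rw [SimpleGraph.dart_edge_eq_iff] at h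
    rcases h with h | h
    · exact d.adj.ne' (congrArg (fun d : G.Dart => d.fst) h)
    · have h2 : (nl d.snd).next d.fst (hmem d.adj.symm) = d.fst :=
        congrArg (fun d : G.Dart => d.snd) h
      exact DCAux.next_ne_self (hnd d.snd) (hlen d.snd) (hmem d.adj.symm) h2
  have hper : ∀ d : G.Dart, 0 < Function.minimalPeriod σ d := by
    intro d
    refine Function.IsPeriodicPt.minimalPeriod_pos (orderOf_pos σ) ?_
    show (σ ^ orderOf σ) d = d
    rw [pow_orderOf_eq_one]; rfl
  have hfix : ∀ d : G.Dart, (σ ^ Function.minimalPeriod σ d) d = d := fun d =>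
    Function.iterate_minimalPeriod
  -- orbits
  let s : Setoid G.Dart := ⟨σ.SameCycle,
    ⟨fun x => Equiv.Perm.SameCycle.refl σ x, Equiv.Perm.SameCycle.symm,
      Equiv.Perm.SameCycle.trans⟩⟩
  haveI hdr : DecidableRel s.r := fun a b => inferInstanceAs (Decidable (σ.SameCycle a b))
  haveI : DecidableEq (Quotient s) := @Quotient.decidableEq _ s hdr
  haveI : Fintype (Quotient s) := @Quotient.fintype _ _ s hdr
  let per : Quotient s → ℕ := fun q => Function.minimalPeriod σ q.out
  let wq : Quotient s → Σ v : V, G.Walk v v := fun q =>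
    ⟨q.out.fst, (DCAux.wN σ hσ1 (per q) q.out).copy rfl (congrArg (fun d : G.Dart => d.fst) (hfix q.out))⟩
  let eqv : Fin (Fintype.card (Quotient s)) ≃ Quotient s := (Fintype.equivFin (Quotient s)).symm
  have hedges : ∀ q, (wq q).2.edges
      = (List.range (per q)).map (fun i => ((σ ^ i) q.out).edge) := fun q => by
    simp only [wq, SimpleGraph.Walk.edges_copy, DCAux.wN_edges]
  let orbitF : Quotient s → Finset G.Dart := fun q =>
    (Finset.range (per q)).image (fun i => (σ ^ i) q.out)
  have hinjOn : ∀ q, Set.InjOn (fun i => (σ ^ i) q.out) (Finset.range (per q)) := by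
    intro q i hi j hj hij
    exact Function.iterate_injOn_Iio_minimalPeriod
      (by simpa using hi) (by simpa using hj) hij
  have hcount : ∀ q e, ((wq q).2.edges).count e
      = ((orbitF q).filter (fun d => d.edge = e)).card := by
    intro q e
    rw [hedges, DCAux.count_map_range, show
      ((orbitF q).filter (fun d => d.edge = e))
        = ((Finset.range (per q)).filter (fun i => ((σ ^ i) q.out).edge = e)).image
            (fun i => (σ ^ i) q.out) from Finset.filter_image,
      Finset.card_image_of_injOn ((hinjOn q).mono (by
        exact_mod_cast Finset.filter_subset _ _))]
  have hmemo : ∀ (q : Quotient s) (d : G.Dart), d ∈ orbitF q ↔ Quotient.mk s d = q := by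
    intro q d
    constructor
    · intro hd
      rw [Finset.mem_image] at hd
      obtain ⟨i, _, rfl⟩ := hd
      exact (Quotient.sound (Equiv.Perm.SameCycle.symm
        ⟨(i : ℤ), by rw [zpow_natCast]⟩)).trans (Quotient.out_eq q)
    · intro h
      have h' : Quotient.mk s d = Quotient.mk s q.out := by rw [h, Quotient.out_eq]
      have hsc : σ.SameCycle q.out d := (Quotient.exact h').symm
      obtain ⟨i, _, hi⟩ := hsc.exists_pow_eq'
      rw [Finset.mem_image]
      refine ⟨i % per q, Finset.mem_range.mpr (Nat.mod_lt _ (hper q.out)), ?_⟩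
      rw [← hi]
      exact Function.iterate_mod_minimalPeriod_eq
  refine ⟨Fintype.card (Quotient s), fun i => wq (eqv i), ?_, ?_, ?_⟩
  · -- (i) no two consecutive edges equal
    intro i
    rw [hedges, show List.Chain' _ _ = List.IsChain _ _ from rfl, List.isChain_map]
    obtain ⟨n, hn⟩ : ∃ n, per (eqv i) = n + 1 :=
      ⟨_, (Nat.succ_pred_eq_of_pos (hper (eqv i).out)).symm⟩
    rw [hn, List.isChain_range_succ]
    intro m _ h
    rw [show (σ ^ (m + 1)) (eqv i).out = σ ((σ ^ m) (eqv i).out) from by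
      rw [pow_succ']; rfl] at h
    exact hkey _ h.symm
  · -- (ii) each edge at most twice in each walk
    intro i e
    rw [hcount]
    have hle2 : ((Finset.univ.filter fun d : G.Dart => d.edge = e)).card ≤ 2 := by
      by_cases he : e ∈ G.edgeSet
      · rw [G.dart_edge_fiber_card e he]
      · have hempty : (Finset.univ.filter fun d : G.Dart => d.edge = e) = ∅ := by
          ext d
          simp only [Finset.mem_filter, Finset.mem_univ, true_and, Finset.notMem_empty,
            iff_false]
          intro h; exact he (h ▸ d.edge_mem)
        simp [hempty]
    exact le_trans (Finset.card_le_card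
      (Finset.filter_subset_filter _ (Finset.subset_univ _))) hle2
  · -- (iii) each edge exactly twice in total
    intro e he
    calc (∑ i, ((wq (eqv i)).2.edges).count e)
        = ∑ q, ((wq q).2.edges).count e :=
          Equiv.sum_comp eqv (fun q => ((wq q).2.edges).count e)
      _ = ∑ q, ((orbitF q).filter (fun d => d.edge = e)).card := by
          simp only [hcount]
      _ = (Finset.univ.biUnion (fun q => (orbitF q).filter (fun d => d.edge = e))).card := by
          rw [Finset.card_biUnion]
          intro q _ q' _ hqq'
          refine Finset.disjoint_left.mpr ?_
          intro d hd hd'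
          exact hqq' (((hmemo q d).mp (Finset.mem_filter.mp hd).1).symm.trans
            ((hmemo q' d).mp (Finset.mem_filter.mp hd').1))
      _ = (Finset.univ.filter fun d : G.Dart => d.edge = e).card := by
          congr 1
          ext d
          simp only [Finset.mem_biUnion, Finset.mem_univ, true_and, Finset.mem_filter]
          constructor
          · rintro ⟨q, _, hd⟩; exact hd
          · intro hd
            exact ⟨Quotient.mk s d, (hmemo _ d).mpr rfl, hd⟩
      _ = 2 := G.dart_edge_fiber_card e he
end
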